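/- arXiv:2011.03100 — 2 statements merged into one kernel-verified Lean document; each statement's English description precedes it below -/
import Mathlib

section
/- Let λ = (λ₁ > λ₂ > ... > λ_m > 0) be a partition of n into distinct parts, with convention λ_{m+1} = 0. If there exists i with λ_i = λ_{i+1} + 2 and λ_{i+1} = λ_{i+2} + 2 (consecutive gaps both equal to 2, allowing the bottom convention λ_{m+1} = 0), then there exists a partition μ of n into distinct parts strictly below λ in dominance order. -/
/-- A partition of `n` into distinct parts: a strictly decreasing list of positive
integers summing to `n`. -/
def IsDistinctPartition (n : ℕ) (l : List ℕ) : Prop :=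
  l.Pairwise (· > ·) ∧ (∀ x ∈ l, 0 < x) ∧ l.sum = n

/-- `μ` is dominated by `l`: every partial sum of `μ` is at most that of `l`. -/
def Dominated (l μ : List ℕ) : Prop :=
  ∀ k : ℕ, (μ.take k).sum ≤ (l.take k).sum

lemma key (i : ℕ) : ∀ (l : List ℕ), l.Pairwise (· > ·) → (∀ x ∈ l, 0 < x) →
    i < l.length → l.getD i 0 = l.getD (i+1) 0 + 2 → l.getD (i+1) 0 = l.getD (i+2) 0 + 2 →
    ∃ μ : List ℕ, μ.Pairwise (· > ·) ∧ (∀ x ∈ μ, 0 < x) ∧ μ.sum = l.sum ∧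
      Dominated l μ ∧ μ ≠ l := by
  induction i with
  | zero =>
    rintro (_ | ⟨a, _ | ⟨b, l''⟩⟩) hs hp hi h1 h2
    · simp at hi
    · simp at h1 h2
    · match l'' with
      | [] =>
        simp at h1 h2
        subst h2
        subst h1
        refine ⟨[3,2,1], ?_, ?_, ?_, ?_, ?_⟩
        · simp
        · decide
        · simp
        · intro k
          match k with
          | 0 => simp
          | 1 => simp
          | 2 => simp
          | (k+3) => simp [List.take_succ_cons]
        · simp
      | c :: r =>
        simp at h1 h2
        have hs1 := List.pairwise_cons.mp hs
        have hs2 := List.pairwise_cons.mp hs1.2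
        have hs3 := List.pairwise_cons.mp hs2.2
        refine ⟨(a-1) :: b :: (c+1) :: r, ?_, ?_, ?_, ?_, ?_⟩
        · refine List.pairwise_cons.mpr ⟨?_, List.pairwise_cons.mpr ⟨?_, List.pairwise_cons.mpr ⟨?_, hs3.2⟩⟩⟩
          · intro x hx
            simp at hx
            rcases hx with rfl | rfl | hx
            · omega
            · omega
            · have := hs3.1 x hx; omega
          · intro x hx
            simp at hx
            rcases hx with rfl | hx
            · omega
            · have := hs3.1 x hx; omega
          · intro x hx
            have := hs3.1 x hx; omega
        · intro x hx
          simp at hx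
          rcases hx with rfl | rfl | rfl | hx
          · omega
          · omega
          · omega
          · exact hp x (by simp [hx])
        · simp; omega
        · intro k
          match k with
          | 0 => simp
          | 1 => simp
          | 2 => simp
          | (k+3) => simp [List.take_succ_cons]; omega
        · intro h
          have : a - 1 = a := by injection h
          omega
  | succ i ih =>
    rintro (_ | ⟨h, t⟩) hs hp hi h1 h2
    · simp at hi
    · simp only [List.getD_cons_succ, List.length_cons, Nat.succ_lt_succ_iff] at h1 h2 hi ⊢
      obtain ⟨μ', hμs, hμp, hμsum, hμdom, hμne⟩ :=
        ih t (List.pairwise_cons.mp hs).2 (fun x hx => hp x (by simp [hx])) hi h1 h2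
      have hs1 := List.pairwise_cons.mp hs
      have ht : t ≠ [] := by intro h; subst h; simp at hi
      obtain ⟨t0, tr, rfl⟩ := List.exists_cons_of_ne_nil ht
      refine ⟨h :: μ', ?_, ?_, ?_, ?_, ?_⟩
      · refine List.pairwise_cons.mpr ⟨?_, hμs⟩
        intro x hx
        have ht0 : h > t0 := hs1.1 t0 (by simp)
        have hd1 := hμdom 1
        simp at hd1
        match μ', hx with
        | m :: mr, hx =>
          simp at hd1
          have hxle : x ≤ m := by
            rcases List.mem_cons.mp hx with rfl | hx
            · exact le_refl _
            · exact le_of_lt ((List.pairwise_cons.mp hμs).1 x hx)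
          omega
      · intro x hx
        rcases List.mem_cons.mp hx with rfl | hx
        · exact hp x (by simp)
        · exact hμp x hx
      · simp [hμsum]
      · intro k
        match k with
        | 0 => simp
        | (k+1) =>
          simp only [List.take_succ_cons, List.sum_cons]
          exact Nat.add_le_add_left (hμdom k) h
      · simp [hμne]

/-- If a distinct-parts partition `λ` of `n` has two consecutive gaps equal to `2`,
i.e. `λ_i = λ_{i+1} + 2` and `λ_{i+1} = λ_{i+2} + 2` (0-based indices, parts
beyond the end being `0`), then there is a distinct-parts partition of `n`
strictly below it in dominance order. -/
theorem exists_smaller_distinct_partition_of_double_gap (n : ℕ) (l : List ℕ)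
    (hl : IsDistinctPartition n l) (i : ℕ) (hi : i < l.length)
    (h1 : l.getD i 0 = l.getD (i + 1) 0 + 2)
    (h2 : l.getD (i + 1) 0 = l.getD (i + 2) 0 + 2) :
    ∃ μ : List ℕ, IsDistinctPartition n μ ∧ Dominated l μ ∧ μ ≠ l := by
  obtain ⟨hs, hp, hsum⟩ := hl
  obtain ⟨μ, h1', h2', h3', h4', h5'⟩ := key i l hs hp hi h1 h2
  exact ⟨μ, ⟨h1', h2', h3'.trans hsum⟩, h4', h5'⟩
end

section
/- For every n ≥ 1, there is a unique minimal element in the dominance order restricted to the set of partitions of n into distinct parts, namely the partition with parts {1, 2, ..., ℓ} \ {k}, where ℓ is the smallest integer with ℓ(ℓ+1)/2 ≥ n and k = ℓ(ℓ+1)/2 − n (with the convention that if k = 0 the parts are exactly {1,...,ℓ}). -/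
def tri (n : ℕ) : ℕ := n * (n + 1) / 2

theorem two_mul_tri (n : ℕ) : 2 * tri n = n * (n + 1) :=
  Nat.mul_div_cancel' (Nat.even_mul_succ_self n).two_dvd

theorem tri_add (a b : ℕ) : tri (a + b) = tri a + tri b + a * b :=
  Nat.eq_of_mul_eq_mul_left two_pos <| by
    rw [two_mul_tri, Nat.mul_add 2 (tri a + tri b), Nat.mul_add 2 (tri a), two_mul_tri, two_mul_tri]
    ring

theorem tri_succ (n : ℕ) : tri (n + 1) = tri n + (n + 1) := by
  rw [tri_add, show tri 1 = 1 from rfl]; ring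

theorem le_tri (n : ℕ) : n ≤ tri n := by
  cases n with
  | zero => rfl
  | succ n => rw [tri_succ]; omega

theorem tri_strictMono : StrictMono tri :=
  strictMono_nat_of_lt_succ fun n => by rw [tri_succ]; omega

theorem sum_range'_one_eq_tri (n : ℕ) : (List.range' 1 n).sum = tri n := by
  induction n with
  | zero => rfl
  | succ n ih => rw [List.range'_concat, List.sum_append, ih, tri_succ]; simp [add_comm 1 n]

section StrictlyDecreasing

variable {l : List ℕ}

theorem sum_add_tri_sub_length_le_tri (hl : l.Pairwise (· > ·)) {a : ℕ} (ha : ∀ x ∈ l, x ≤ a) :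
    l.sum + tri (a - l.length) ≤ tri a := by
  induction l generalizing a with
  | nil => simp
  | cons x t ih =>
    obtain ⟨hxt, ht⟩ := List.pairwise_cons.1 hl
    have hxa : x ≤ a := ha x List.mem_cons_self
    have hta : ∀ y ∈ t, y ≤ a - 1 := fun y hy => by
      have := hxt y hy; omega
    have ht' := ih ht hta
    cases a with
    | zero => simp_all [tri]
    | succ b =>
      simp only [List.sum_cons, List.length_cons, Nat.add_sub_cancel, tri_succ] at ht' ⊢
      rw [Nat.add_sub_add_right]
      omega

theorem length_mul_add_tri_length_le_sum (hl : l.Pairwise (· > ·)) {b : ℕ} (hb : ∀ x ∈ l, b < x) :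
    l.length * b + tri l.length ≤ l.sum := by
  induction l using List.reverseRecOn generalizing b with
  | nil => simp [tri]
  | append_singleton t x ih =>
    obtain ⟨ht, -, htx⟩ := List.pairwise_append.1 hl
    have hbx : b < x := hb x (by simp)
    have ht' := ih ht (b := x) fun y hy => htx y hy x (List.mem_singleton_self x)
    simp only [List.sum_append, List.length_append, List.sum_singleton, List.length_singleton,
      tri_succ]
    nlinarith

theorem mul_getElem_add_tri_le_sum_take (hl : l.Pairwise (· > ·)) {j : ℕ} (hj : j < l.length) :
    j * l[j] + tri j ≤ (l.take j).sum := by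
  rw [← List.take_append_drop j l] at hl
  have hlen : (l.take j).length = j := List.length_take_of_le hj.le
  have hgt : ∀ x ∈ l.take j, l[j] < x := fun x hx =>
    (List.pairwise_append.1 hl).2.2 x hx l[j] <| by
      rw [List.drop_eq_getElem_cons hj]; exact List.mem_cons_self
  simpa [hlen] using length_mul_add_tri_length_le_sum (List.pairwise_append.1 hl).1 hgt

theorem sum_drop_le_tri_getElem (hl : l.Pairwise (· > ·)) {j : ℕ} (hj : j < l.length) :
    (l.drop j).sum ≤ tri l[j] := by
  have hd : (l.drop j).Pairwise (· > ·) := hl.sublist (List.drop_sublist j l)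
  rw [List.drop_eq_getElem_cons hj] at hd ⊢
  have hle : ∀ x ∈ l[j] :: l.drop (j + 1), x ≤ l[j] := by
    simp only [List.mem_cons, forall_eq_or_imp, le_refl, true_and]
    exact fun x hx => (List.rel_of_pairwise_cons hd hx).le
  exact (Nat.le_add_right _ _).trans (sum_add_tri_sub_length_le_tri hd hle)

end StrictlyDecreasing

theorem tri_length_le_of_isDistinctPartition {n : ℕ} {l : List ℕ} (hl : IsDistinctPartition n l) :
    tri l.length ≤ n := by
  simpa [hl.2.2] using length_mul_add_tri_length_le_sum hl.1 hl.2.1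

theorem dominated_of_isDistinctPartition {n ℓ : ℕ} {L μ : List ℕ} (hL : IsDistinctPartition n L)
    (hμ : IsDistinctPartition n μ) (hLℓ : ∀ x ∈ L, x ≤ ℓ) (hℓ : ℓ ≤ L.length + 1)
    (hlen : μ.length ≤ L.length) : Dominated μ L := by
  intro j
  have hLsplit := List.sum_take_add_sum_drop L j
  rw [hL.2.2] at hLsplit
  rcases le_or_gt μ.length j with hj | hj
  · rw [List.take_of_length_le hj, hμ.2.2]
    omega
  have hμsplit := List.sum_take_add_sum_drop μ j
  rw [hμ.2.2] at hμsplit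
  have hμtake := mul_getElem_add_tri_le_sum_take hμ.1 hj
  have hμdrop := sum_drop_le_tri_getElem hμ.1 hj
  have hLtake : (L.take j).sum + tri (ℓ - j) ≤ tri ℓ := by
    simpa [List.length_take_of_le (hj.trans_le hlen).le] using
      sum_add_tri_sub_length_le_tri (hL.1.sublist (List.take_sublist j L))
        fun x hx => hLℓ x (List.mem_of_mem_take hx)
  have hLdrop : tri (ℓ - 1 - j) ≤ (L.drop j).sum := by
    have := length_mul_add_tri_length_le_sum (hL.1.sublist (List.drop_sublist j L))
      fun x hx => hL.2.1 x (List.mem_of_mem_drop hx)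
    simp only [List.length_drop, mul_zero, zero_add] at this
    exact (tri_strictMono.monotone (by omega)).trans this
  rcases lt_or_ge (μ[j] + j) ℓ with hM | hM
  · have := tri_strictMono.monotone (show μ[j] ≤ ℓ - 1 - j by omega)
    omega
  · have hsplit : tri ℓ ≤ tri j + tri (ℓ - j) + j * (ℓ - j) := by
      rw [← tri_add]; exact tri_strictMono.monotone (by omega)
    have := Nat.mul_le_mul_left j (show ℓ - j ≤ μ[j] by omega)
    omega

theorem eq_of_forall_sum_take_eq {l m : List ℕ} (hl : ∀ x ∈ l, 0 < x) (hm : ∀ x ∈ m, 0 < x)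
    (h : ∀ j, (l.take j).sum = (m.take j).sum) : l = m := by
  induction l generalizing m with
  | nil =>
    cases m with
    | nil => rfl
    | cons b s => simpa using (hm b List.mem_cons_self).ne (by simpa using h 1)
  | cons a t ih =>
    cases m with
    | nil => simpa using (hl a List.mem_cons_self).ne' (by simpa using h 1)
    | cons b s =>
      have hab : a = b := by simpa using h 1
      subst hab
      congr
      refine ih (fun x hx => hl x (List.mem_cons_of_mem a hx))
        (fun x hx => hm x (List.mem_cons_of_mem a hx)) fun j => ?_
      simpa using h (j + 1)

theorem Dominated.antisymm {l μ : List ℕ} (hl : ∀ x ∈ l, 0 < x) (hμ : ∀ x ∈ μ, 0 < x)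
    (h₁ : Dominated l μ) (h₂ : Dominated μ l) : l = μ :=
  eq_of_forall_sum_take_eq hl hμ fun j => le_antisymm (h₂ j) (h₁ j)

def staircaseErase (ℓ k : ℕ) : List ℕ := ((List.range' 1 ℓ).erase k).reverse

section StaircaseErase

variable {ℓ k : ℕ}

theorem le_of_mem_staircaseErase {x : ℕ} (hx : x ∈ staircaseErase ℓ k) : x ≤ ℓ := by
  have := List.mem_range'_1.1 (List.erase_subset (List.mem_reverse.1 hx))
  omega

theorem length_staircaseErase (hk : k ≤ ℓ) :
    (staircaseErase ℓ k).length = if k = 0 then ℓ else ℓ - 1 := by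
  simp only [staircaseErase, List.length_reverse, List.length_erase, List.mem_range'_1,
    List.length_range']
  split_ifs <;> omega

theorem isDistinctPartition_staircaseErase (hk : k ≤ ℓ) :
    IsDistinctPartition (tri ℓ - k) (staircaseErase ℓ k) := by
  refine ⟨List.pairwise_reverse.2 ((List.pairwise_lt_range' ..).sublist List.erase_sublist),
    fun x hx => ?_, ?_⟩
  · have := List.mem_range'_1.1 (List.erase_subset (List.mem_reverse.1 hx))
    omega
  · rw [staircaseErase, List.sum_reverse]
    by_cases hmem : k ∈ List.range' 1 ℓ
    · have := List.sum_erase hmem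
      rw [sum_range'_one_eq_tri] at this
      omega
    · rw [List.erase_of_not_mem hmem, sum_range'_one_eq_tri]
      simp only [List.mem_range'_1, not_and, not_lt] at hmem
      omega

theorem dominated_staircaseErase (hk : k ≤ ℓ) {μ : List ℕ}
    (hμ : IsDistinctPartition (tri ℓ - k) μ) : Dominated μ (staircaseErase ℓ k) := by
  have hlen := length_staircaseErase hk
  refine dominated_of_isDistinctPartition (isDistinctPartition_staircaseErase hk) hμ
    (fun x => le_of_mem_staircaseErase) (by rw [hlen]; split_ifs <;> omega) ?_
  have hμlen := tri_length_le_of_isDistinctPartition hμ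
  rw [hlen]
  split_ifs with hk0
  · exact tri_strictMono.le_iff_le.1 (by omega)
  · have := le_tri ℓ
    exact Nat.le_sub_one_of_lt (tri_strictMono.lt_iff_lt.1 (by omega))

end StaircaseErase

theorem unique_minimal_distinct_partition_general (n : ℕ)
    (ℓ : ℕ) (hℓ : n ≤ ℓ * (ℓ + 1) / 2) (hℓmin : ∀ m : ℕ, m < ℓ → m * (m + 1) / 2 < n)
    (k : ℕ) (hk : k = ℓ * (ℓ + 1) / 2 - n)
    (L : List ℕ) (hL : L = ((List.range' 1 ℓ).filter (fun j => j ≠ k)).reverse) :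
    IsDistinctPartition n L ∧
      (∀ μ : List ℕ, IsDistinctPartition n μ → Dominated μ L) ∧
      (∀ μ : List ℕ, IsDistinctPartition n μ → Dominated L μ → μ = L) := by
  change n ≤ tri ℓ at hℓ
  change k = tri ℓ - n at hk
  have hkℓ : k ≤ ℓ := by
    rcases Nat.eq_zero_or_pos ℓ with rfl | hℓpos
    · simp [hk, tri]
    have hprev : tri (ℓ - 1) < n := hℓmin (ℓ - 1) (by omega)
    have := tri_succ (ℓ - 1)
    rw [Nat.sub_add_cancel hℓpos] at this
    omega
  have hLk : L = staircaseErase ℓ k := by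
    rw [hL, staircaseErase, (List.nodup_range' ..).erase_eq_filter]; grind
  obtain rfl : n = tri ℓ - k := by omega
  subst hLk
  have hLpart := isDistinctPartition_staircaseErase hkℓ
  have hmin : ∀ μ, IsDistinctPartition (tri ℓ - k) μ → Dominated μ (staircaseErase ℓ k) :=
    fun μ => dominated_staircaseErase hkℓ
  exact ⟨hLpart, hmin, fun μ hμ hdom => Dominated.antisymm hμ.2.1 hLpart.2.1 (hmin μ hμ) hdom⟩

/-- For `n ≥ 1`, the dominance order on partitions of `n` into distinct parts has
a unique minimal element, namely the partition with parts `{1, …, ℓ} \ {k}` where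
`ℓ` is least with `ℓ(ℓ+1)/2 ≥ n` and `k = ℓ(ℓ+1)/2 − n`. -/
theorem unique_minimal_distinct_partition (n : ℕ) (hn : 1 ≤ n)
    (ℓ : ℕ) (hℓ : n ≤ ℓ * (ℓ + 1) / 2) (hℓmin : ∀ m : ℕ, m < ℓ → m * (m + 1) / 2 < n)
    (k : ℕ) (hk : k = ℓ * (ℓ + 1) / 2 - n)
    (L : List ℕ) (hL : L = ((List.range' 1 ℓ).filter (fun j => j ≠ k)).reverse) :
    IsDistinctPartition n L ∧
      (∀ μ : List ℕ, IsDistinctPartition n μ → Dominated μ L) ∧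
      (∀ μ : List ℕ, IsDistinctPartition n μ → Dominated L μ → μ = L) :=
  unique_minimal_distinct_partition_general n ℓ hℓ hℓmin k hk L hL
end
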